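/- arXiv:0912.4146 — 2 statements merged into one kernel-verified Lean document; each statement's English description precedes it below -/
import Mathlib

section
/- Let f : ℝ → ℝ be C^1 with f'(v_±) = 0, v_- < v_+, and suppose v : ℝ → ℝ is a C^2 function with v' > 0 everywhere, v(ξ) → v_± and v'(ξ) → 0 as ξ → ±∞, satisfying −s v' = (μ − f'(v) + v'')v' for constants s and μ. Then f(v_+) = f(v_-), s = −μ, and (1/2)(v')^2 = f(v) − f(v_+) on ℝ. -/
open Filter

/-- necessary conditions for traveling waves of the
non-conservative model: equal wells, `s = −μ`, and the first integral. -/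
theorem stmt5 (f v : ℝ → ℝ) (vm vp s μ : ℝ)
    (hvmp : vm < vp)
    (hf : ContDiff ℝ 1 f)
    (hfm : deriv f vm = 0) (hfp : deriv f vp = 0)
    (hv : ContDiff ℝ 2 v)
    (hv' : ∀ ξ, 0 < deriv v ξ)
    (hlim_p : Tendsto v atTop (nhds vp))
    (hlim_m : Tendsto v atBot (nhds vm))
    (hlim'_p : Tendsto (deriv v) atTop (nhds 0))
    (hlim'_m : Tendsto (deriv v) atBot (nhds 0))
    (heq : ∀ ξ, -s * deriv v ξ =
      (μ - deriv f (v ξ) + deriv (deriv v) ξ) * deriv v ξ) :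
    f vp = f vm ∧ s = -μ ∧
      ∀ ξ, (1 / 2) * (deriv v ξ) ^ 2 = f (v ξ) - f vp := by
  have hvd : Differentiable ℝ v := hv.differentiable (by norm_num)
  have hcd : ContDiff ℝ 1 (deriv v) := by
    have : ContDiff ℝ ((1 : WithTop ℕ∞) + 1) v := by exact_mod_cast hv
    exact (contDiff_succ_iff_deriv.mp this).2.2
  have hdv : Differentiable ℝ (deriv v) := hcd.differentiable one_ne_zero
  have hfd : Differentiable ℝ f := hf.differentiable one_ne_zero
  have hfc : Continuous (deriv f) := hf.continuous_deriv le_rfl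
  -- the reduced scalar ODE
  have key : ∀ ξ, deriv (deriv v) ξ = deriv f (v ξ) - μ - s := by
    intro ξ
    have h := heq ξ
    have h2 : -s = μ - deriv f (v ξ) + deriv (deriv v) ξ :=
      mul_right_cancel₀ (ne_of_gt (hv' ξ)) h
    linarith
  -- limit of v'' at +∞
  have hg' : Tendsto (deriv (deriv v)) atTop (nhds (-μ - s)) := by
    have h1 : Tendsto (fun ξ => deriv f (v ξ)) atTop (nhds 0) := by
      have := (hfc.continuousAt (x := vp)).tendsto.comp hlim_p
      rwa [hfp] at this
    have h2 : Tendsto (fun ξ => deriv f (v ξ) - μ - s) atTop (nhds (0 - μ - s)) :=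
      (h1.sub_const μ).sub_const s
    rw [show (0:ℝ) - μ - s = -μ - s by ring] at h2
    exact h2.congr (fun ξ => (key ξ).symm)
  -- mean value argument : v'' cannot tend to a nonzero limit
  have hc : ∀ x : ℝ, ∃ c ∈ Set.Ioo x (x + 1),
      deriv (deriv v) c = (deriv v (x + 1) - deriv v x) / (x + 1 - x) := by
    intro x
    exact exists_hasDerivAt_eq_slope (deriv v) (deriv (deriv v)) (by linarith)
      (hdv.continuous.continuousOn)
      (fun y _ => (hdv y).hasDerivAt)
  choose c hc1 hc2 using hc
  have hcat : Tendsto c atTop atTop :=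
    tendsto_atTop_mono (fun x => (hc1 x).1.le) tendsto_id
  have hseq : Tendsto (fun x => deriv (deriv v) (c x)) atTop (nhds 0) := by
    have h1 : Tendsto (fun x : ℝ => deriv v (x + 1)) atTop (nhds 0) :=
      hlim'_p.comp (tendsto_atTop_add_const_right _ 1 tendsto_id)
    have h2 : Tendsto (fun x : ℝ => (deriv v (x + 1) - deriv v x) / (x + 1 - x))
        atTop (nhds 0) := by
      have := (h1.sub hlim'_p)
      simp only [sub_zero] at this ⊢
      refine Tendsto.congr (fun x => ?_) this
      rw [show x + 1 - x = (1:ℝ) by ring, div_one]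
    exact h2.congr (fun x => (hc2 x).symm)
  have hμs : -μ - s = 0 :=
    tendsto_nhds_unique (hg'.comp hcat) hseq
  have hs : s = -μ := by linarith
  -- with s = -μ, v'' = f'(v); first integral
  have key2 : ∀ ξ, deriv (deriv v) ξ = deriv f (v ξ) := by
    intro ξ; rw [key ξ, hs]; ring
  set E : ℝ → ℝ := fun ξ => (1 / 2) * (deriv v ξ) ^ 2 - f (v ξ) with hE
  have hE' : ∀ ξ, HasDerivAt E 0 ξ := by
    intro ξ
    have h1 : HasDerivAt (deriv v) (deriv (deriv v) ξ) ξ := (hdv ξ).hasDerivAt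
    have h2 : HasDerivAt (fun ξ => (1/2) * (deriv v ξ) ^ 2)
        ((1/2) * ((2 : ℝ) * (deriv v ξ) ^ 1 * deriv (deriv v) ξ)) ξ := by
      exact_mod_cast (h1.pow 2).const_mul (1/2 : ℝ)
    have h3 : HasDerivAt (fun ξ => f (v ξ)) (deriv f (v ξ) * deriv v ξ) ξ :=
      (hfd (v ξ)).hasDerivAt.comp ξ (hvd ξ).hasDerivAt
    have h4 := h2.sub h3
    have : (1/2) * ((2 : ℝ) * (deriv v ξ) ^ 1 * deriv (deriv v) ξ)
        - deriv f (v ξ) * deriv v ξ = 0 := by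
      rw [key2 ξ]; ring
    rwa [this] at h4
  have hEconst : ∀ x y, E x = E y :=
    is_const_of_deriv_eq_zero (fun x => (hE' x).differentiableAt)
      (fun x => (hE' x).deriv)
  have hEp : Tendsto E atTop (nhds (-f vp)) := by
    have h1 : Tendsto (fun ξ => (1/2) * (deriv v ξ) ^ 2) atTop (nhds ((1/2) * 0 ^ 2)) :=
      ((hlim'_p.pow 2).const_mul _)
    have h2 : Tendsto (fun ξ => f (v ξ)) atTop (nhds (f vp)) :=
      (hfd.continuous.continuousAt).tendsto.comp hlim_p
    have := h1.sub h2
    norm_num at this ⊢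
    exact this
  have hEm : Tendsto E atBot (nhds (-f vm)) := by
    have h1 : Tendsto (fun ξ => (1/2) * (deriv v ξ) ^ 2) atBot (nhds ((1/2) * 0 ^ 2)) :=
      ((hlim'_m.pow 2).const_mul _)
    have h2 : Tendsto (fun ξ => f (v ξ)) atBot (nhds (f vm)) :=
      (hfd.continuous.continuousAt).tendsto.comp hlim_m
    have := h1.sub h2
    norm_num at this ⊢
    exact this
  have hEconst' : Tendsto E atTop (nhds (E 0)) := by
    refine Tendsto.congr (fun x => (hEconst 0 x)) tendsto_const_nhds
  have hEconst'' : Tendsto E atBot (nhds (E 0)) := by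
    refine Tendsto.congr (fun x => (hEconst 0 x)) tendsto_const_nhds
  have hp : E 0 = -f vp := tendsto_nhds_unique hEconst' hEp
  have hm : E 0 = -f vm := tendsto_nhds_unique hEconst'' hEm
  refine ⟨by linarith, hs, fun ξ => ?_⟩
  have := hEconst ξ 0
  simp only [hE] at this
  have hp' : 1 / 2 * deriv v 0 ^ 2 - f (v 0) = -f vp := hp
  linarith [this, hp']
end

section
/- Let v_- < v_+, let m ≥ 2 be an integer, and let a be smooth with 0 < a_0 ≤ a(v) ≤ a_1 on [v_-, v_+]. If v : ℝ → (v_-, v_+) is a strictly increasing solution of v' = a(v)^{1/2}(v_+ − v)^{m}(v − v_-) with v(−∞) = v_-, v(+∞) = v_+, then there exists C > 0 such that |v(ξ) − v_+| ≤ C(1 + |ξ|)^{−1/(m−1)} for ξ ≥ 0. -/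
open Filter

/-- algebraic decay of the traveling wave profile at `+∞` in the
degenerate case `m ≥ 2`. -/
theorem stmt8 (vm vp : ℝ) (hvmp : vm < vp)
    (m : ℕ) (hm : 2 ≤ m)
    (a : ℝ → ℝ) (ha : ContDiff ℝ (⊤ : ℕ∞) a)
    (a0 a1 : ℝ) (ha0 : 0 < a0)
    (hbound : ∀ x ∈ Set.Icc vm vp, a0 ≤ a x ∧ a x ≤ a1)
    (v : ℝ → ℝ)
    (hrange : ∀ ξ, v ξ ∈ Set.Ioo vm vp)
    (hmono : StrictMono v)
    (hode : ∀ ξ, HasDerivAt v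
      (Real.sqrt (a (v ξ)) * (vp - v ξ) ^ m * (v ξ - vm)) ξ)
    (hlim_p : Tendsto v atTop (nhds vp))
    (hlim_m : Tendsto v atBot (nhds vm)) :
    ∃ C : ℝ, 0 < C ∧ ∀ ξ : ℝ, 0 ≤ ξ →
      |v ξ - vp| ≤ C * (1 + |ξ|) ^ (-(1 : ℝ) / ((m : ℝ) - 1)) := by
  -- notation
  set p : ℝ := -((m : ℝ) - 1) with hp
  have hm1 : (1 : ℝ) ≤ (m : ℝ) - 1 := by
    have : (2 : ℝ) ≤ (m : ℝ) := by exact_mod_cast hm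
    linarith
  have hpneg : p < 0 := by simp only [hp]; linarith
  have hpne : p ≠ 0 := ne_of_lt hpneg
  have hw_pos : ∀ ξ, 0 < vp - v ξ := fun ξ => sub_pos.2 (hrange ξ).2
  have hw_ne : ∀ ξ, vp - v ξ ≠ 0 := fun ξ => ne_of_gt (hw_pos ξ)
  -- g ξ = (vp - v ξ)^p
  set g : ℝ → ℝ := fun ξ => (vp - v ξ) ^ p with hg
  -- derivative of w = vp - v
  have hw' : ∀ ξ, HasDerivAt (fun ξ => vp - v ξ)
      (-(Real.sqrt (a (v ξ)) * (vp - v ξ) ^ m * (v ξ - vm))) ξ := by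
    intro ξ
    simpa using (hode ξ).const_sub vp
  -- derivative of g
  have hg' : ∀ ξ, HasDerivAt g
      (((m : ℝ) - 1) * Real.sqrt (a (v ξ)) * (v ξ - vm)) ξ := by
    intro ξ
    have h := (hw' ξ).rpow_const (p := p) (Or.inl (hw_ne ξ))
    have key : -(Real.sqrt (a (v ξ)) * (vp - v ξ) ^ m * (v ξ - vm)) * p *
        (vp - v ξ) ^ (p - 1)
        = ((m : ℝ) - 1) * Real.sqrt (a (v ξ)) * (v ξ - vm) := by
      have hpow : (vp - v ξ) ^ (p - 1) * (vp - v ξ) ^ m = 1 := by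
        rw [← Real.rpow_natCast (vp - v ξ) m, ← Real.rpow_add (hw_pos ξ)]
        have : p - 1 + (m : ℝ) = 0 := by rw [hp]; ring
        rw [this, Real.rpow_zero]
      calc -(Real.sqrt (a (v ξ)) * (vp - v ξ) ^ m * (v ξ - vm)) * p *
            (vp - v ξ) ^ (p - 1)
          = (-p) * ((vp - v ξ) ^ (p - 1) * (vp - v ξ) ^ m) *
            (Real.sqrt (a (v ξ)) * (v ξ - vm)) := by ring
        _ = ((m : ℝ) - 1) * Real.sqrt (a (v ξ)) * (v ξ - vm) := by
            rw [hpow, hp]; ring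
    rw [key] at h
    exact h
  -- lower bound on g' for ξ ≥ 0
  set K : ℝ := ((m : ℝ) - 1) * Real.sqrt a0 * (v 0 - vm) with hK
  have hv0 : 0 < v 0 - vm := sub_pos.2 (hrange 0).1
  have hsqrt0 : (0 : ℝ) < Real.sqrt a0 := Real.sqrt_pos.2 ha0
  have hKpos : 0 < K := by
    apply mul_pos (mul_pos (by linarith) hsqrt0) hv0
  have hg'_ge : ∀ ξ : ℝ, 0 ≤ ξ →
      K ≤ ((m : ℝ) - 1) * Real.sqrt (a (v ξ)) * (v ξ - vm) := by
    intro ξ hξ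
    have hmem : v ξ ∈ Set.Icc vm vp :=
      ⟨le_of_lt (hrange ξ).1, le_of_lt (hrange ξ).2⟩
    have ha0' : Real.sqrt a0 ≤ Real.sqrt (a (v ξ)) :=
      Real.sqrt_le_sqrt (hbound _ hmem).1
    have hv' : v 0 - vm ≤ v ξ - vm := by
      have := hmono.monotone hξ; linarith
    have h1 : 0 < Real.sqrt (a (v ξ)) := lt_of_lt_of_le hsqrt0 ha0'
    calc K = ((m : ℝ) - 1) * Real.sqrt a0 * (v 0 - vm) := rfl
      _ ≤ ((m : ℝ) - 1) * Real.sqrt (a (v ξ)) * (v 0 - vm) := by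
          apply mul_le_mul_of_nonneg_right _ (le_of_lt hv0)
          exact mul_le_mul_of_nonneg_left ha0' (by linarith)
      _ ≤ ((m : ℝ) - 1) * Real.sqrt (a (v ξ)) * (v ξ - vm) := by
          apply mul_le_mul_of_nonneg_left hv'
          positivity
  -- h ξ = g ξ - K ξ is monotone on [0, ∞)
  have hh : ∀ x : ℝ, HasDerivAt (fun ξ => g ξ - K * ξ)
      (((m : ℝ) - 1) * Real.sqrt (a (v x)) * (v x - vm) - K) x := by
    intro x
    have hKx : HasDerivAt (fun y : ℝ => K * y) K x := by
      simpa using (hasDerivAt_id x).const_mul K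
    exact (hg' x).sub hKx
  have hmonoh : MonotoneOn (fun ξ => g ξ - K * ξ) (Set.Ici (0 : ℝ)) := by
    apply monotoneOn_of_deriv_nonneg (convex_Ici 0)
    · exact fun x _ => (hh x).continuousAt.continuousWithinAt
    · intro x _
      exact (hh x).differentiableAt.differentiableWithinAt
    · intro x hx
      rw [interior_Ici] at hx
      rw [(hh x).deriv]
      have := hg'_ge x (le_of_lt hx)
      linarith
  -- so g ξ ≥ g 0 + K ξ for ξ ≥ 0
  have hgrow : ∀ ξ : ℝ, 0 ≤ ξ → g 0 + K * ξ ≤ g ξ := by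
    intro ξ hξ
    have := hmonoh (Set.self_mem_Ici) hξ hξ
    simp only [mul_zero, sub_zero] at this
    linarith
  have hg0pos : 0 < g 0 := Real.rpow_pos_of_pos (hw_pos 0) p
  set c1 : ℝ := min (g 0) K with hc1
  have hc1pos : 0 < c1 := lt_min hg0pos hKpos
  -- final constant
  refine ⟨c1 ^ (1 / p), Real.rpow_pos_of_pos hc1pos _, ?_⟩
  intro ξ hξ
  have habs : |ξ| = ξ := abs_of_nonneg hξ
  have hwabs : |v ξ - vp| = vp - v ξ := by
    rw [abs_sub_comm]; exact abs_of_pos (hw_pos ξ)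
  have hglow : c1 * (1 + ξ) ≤ g ξ := by
    have := hgrow ξ hξ
    have h1 : c1 ≤ g 0 := min_le_left _ _
    have h2 : c1 * ξ ≤ K * ξ := mul_le_mul_of_nonneg_right (min_le_right _ _) hξ
    nlinarith
  have hc1ξ : 0 < c1 * (1 + ξ) := by positivity
  -- w ξ = (g ξ)^(1/p)
  have hwg : vp - v ξ = (g ξ) ^ (1 / p) := by
    simp only [hg]
    rw [← Real.rpow_mul (hw_pos ξ).le, mul_one_div, div_self hpne, Real.rpow_one]
  have hstep : (g ξ) ^ (1 / p) ≤ (c1 * (1 + ξ)) ^ (1 / p) :=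
    Real.rpow_le_rpow_of_nonpos hc1ξ hglow (le_of_lt (one_div_neg.2 hpneg))
  have hmul : (c1 * (1 + ξ)) ^ (1 / p) = c1 ^ (1 / p) * (1 + ξ) ^ (1 / p) :=
    Real.mul_rpow hc1pos.le (by linarith)
  have heq : 1 / p = -(1 : ℝ) / ((m : ℝ) - 1) := by
    rw [hp, div_neg, neg_div]
  rw [hwabs, habs, hwg, ← heq, ← hmul]
  exact hstep
end
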